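/- Let μ be a probability measure on (E, B(E)) and Π a Markov kernel on E reversible with respect to μ. Assume there exists ε > 0 such that Π(x,A) ≥ ε μ(A) for all x ∈ E and A ∈ B(E). Then for any probability measure ν ≪ μ with dν/dμ ∈ L²(E,μ) and any k ≥ 1, ‖νΠ^k − μ‖_TV ≤ (1/2) ‖ν − μ‖_{L²(E,μ)} · (1 − ε)^k. -/

import Mathlib

/-!
Reversibility makes `μ` invariant. The minorization splits `Π(x, ·) = ε μ + (Π(x, ·) - ε μ)`:
the first part does not depend on `x`, so it cancels in `νΠ(f) - μΠ(f)`, and the second has mass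
`1 - ε`. Hence each step contracts the total variation distance to `μ` by the factor `1 - ε`
(Doeblin), and at the start `2 ‖ν - μ‖_TV ≤ ‖dν/dμ - 1‖_{L¹(μ)} ≤ ‖dν/dμ - 1‖_{L²(μ)}`.
-/

open MeasureTheory ProbabilityTheory
open scoped ENNReal

/-- The `n`-fold iterate of a Markov kernel: `kpow P 0 = id`, `kpow P (n+1) = P^n ∘ P`. -/
noncomputable def kpow {α : Type*} [MeasurableSpace α] (P : Kernel α α) : ℕ → Kernel α α
  | 0 => Kernel.id
  | (n + 1) => (kpow P n).comp P

/-- The `L²(μ)` norm of the difference `ν - μ`, for `ν ≪ μ`: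
`‖ν - μ‖_{L²(μ)} = (∫ (dν/dμ - 1)² dμ)^{1/2}`. -/
noncomputable def l2Dist {α : Type*} [MeasurableSpace α] (ν μ : Measure α) : ℝ :=
  Real.sqrt (∫ x, ((ν.rnDeriv μ x).toReal - 1) ^ 2 ∂μ)

/-- Total variation distance `‖μ - ν‖_TV = (1/2) sup_{f : X → [-1,1] measurable} |μ(f) - ν(f)|`. -/
noncomputable def tvDist {α : Type*} [MeasurableSpace α] (μ ν : Measure α) : ℝ :=
  (1 / 2) * sSup {r : ℝ | ∃ f : α → ℝ, Measurable f ∧ (∀ x, f x ∈ Set.Icc (-1 : ℝ) 1) ∧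
    r = |(∫ x, f x ∂μ) - ∫ x, f x ∂ν|}

section

variable {α : Type*} [MeasurableSpace α]

lemma abs_integral_le_of_abs_le {μ : Measure α} [IsProbabilityMeasure μ] {f : α → ℝ} {c : ℝ}
    (hb : ∀ x, |f x| ≤ c) : |∫ x, f x ∂μ| ≤ c := by
  simpa using norm_integral_le_of_norm_le_const (μ := μ) (f := f) (ae_of_all _ hb)

lemma bddAbove_tvDist_set (μ ν : Measure α) [IsProbabilityMeasure μ] [IsProbabilityMeasure ν] :
    BddAbove {r : ℝ | ∃ f : α → ℝ, Measurable f ∧ (∀ x, f x ∈ Set.Icc (-1 : ℝ) 1) ∧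
      r = |(∫ x, f x ∂μ) - ∫ x, f x ∂ν|} := by
  refine ⟨2, ?_⟩
  rintro _ ⟨f, -, hb, rfl⟩
  have hb : ∀ x, |f x| ≤ 1 := fun x => abs_le.2 (hb x)
  calc |(∫ x, f x ∂μ) - ∫ x, f x ∂ν| ≤ |∫ x, f x ∂μ| + |∫ x, f x ∂ν| := abs_sub _ _
    _ ≤ 1 + 1 := add_le_add (abs_integral_le_of_abs_le hb) (abs_integral_le_of_abs_le hb)
    _ = 2 := by norm_num

lemma abs_integral_sub_le_two_mul_tvDist (μ ν : Measure α) [IsProbabilityMeasure μ]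
    [IsProbabilityMeasure ν] {f : α → ℝ} {c : ℝ} (hf : Measurable f) (hc : 0 ≤ c)
    (hb : ∀ x, |f x| ≤ c) :
    |(∫ x, f x ∂μ) - ∫ x, f x ∂ν| ≤ 2 * c * tvDist μ ν := by
  rcases hc.eq_or_lt with rfl | hc
  · have hf0 : f = 0 := funext fun x => abs_nonpos_iff.1 (hb x)
    simp [hf0]
  have hmem : |(∫ x, f x / c ∂μ) - ∫ x, f x / c ∂ν| ≤ 2 * tvDist μ ν := by
    rw [tvDist, ← mul_assoc, mul_one_div_cancel two_ne_zero, one_mul]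
    refine le_csSup (bddAbove_tvDist_set μ ν) ⟨fun x => f x / c, hf.div_const c, fun x => ?_, rfl⟩
    rw [Set.mem_Icc, ← abs_le, abs_div, abs_of_pos hc, div_le_one hc]
    exact hb x
  rw [integral_div, integral_div, ← sub_div, abs_div, abs_of_pos hc, div_le_iff₀ hc] at hmem
  linarith

lemma tvDist_le_of_forall_abs_integral_sub_le (μ ν : Measure α) {C : ℝ}
    (h : ∀ f : α → ℝ, Measurable f → (∀ x, |f x| ≤ 1) →
      |(∫ x, f x ∂μ) - ∫ x, f x ∂ν| ≤ 2 * C) :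
    tvDist μ ν ≤ C := by
  have hsup : sSup {r : ℝ | ∃ f : α → ℝ, Measurable f ∧ (∀ x, f x ∈ Set.Icc (-1 : ℝ) 1) ∧
      r = |(∫ x, f x ∂μ) - ∫ x, f x ∂ν|} ≤ 2 * C := by
    refine csSup_le ⟨_, 0, measurable_const, fun _ => by norm_num, rfl⟩ ?_
    rintro _ ⟨f, hf, hb, rfl⟩
    exact h f hf fun x => abs_le.2 (hb x)
  rw [tvDist]
  linarith

lemma le_one_of_ofReal_smul_le {μ ν : Measure α} [IsProbabilityMeasure μ] [IsProbabilityMeasure ν]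
    {ε : ℝ} (hle : ENNReal.ofReal ε • μ ≤ ν) : ε ≤ 1 := by
  have h := Measure.le_iff.1 hle Set.univ MeasurableSet.univ
  simp only [Measure.smul_apply, measure_univ, smul_eq_mul, mul_one] at h
  exact ENNReal.ofReal_le_one.1 h

lemma mul_integral_le_integral_of_ofReal_smul_le {μ ν : Measure α} {ε : ℝ} (hε : 0 ≤ ε)
    (hle : ENNReal.ofReal ε • μ ≤ ν) {f : α → ℝ} (hf : ∀ x, 0 ≤ f x) (hint : Integrable f ν) :
    ε * ∫ x, f x ∂μ ≤ ∫ x, f x ∂ν := by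
  have := integral_mono_measure hle (ae_of_all _ hf) hint
  rwa [integral_smul_measure, ENNReal.toReal_ofReal hε, smul_eq_mul] at this

lemma abs_integral_sub_mul_integral_le {μ ν : Measure α} [IsProbabilityMeasure μ]
    [IsProbabilityMeasure ν] {ε : ℝ} (hε : 0 ≤ ε) (hle : ENNReal.ofReal ε • μ ≤ ν)
    {f : α → ℝ} (hf : Measurable f) (hb : ∀ x, |f x| ≤ 1) :
    |(∫ x, f x ∂ν) - ε * ∫ x, f x ∂μ| ≤ 1 - ε := by
  have hfν : Integrable f ν := .of_bound hf.aestronglyMeasurable 1 (ae_of_all _ hb)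
  have hfμ : Integrable f μ := .of_bound hf.aestronglyMeasurable 1 (ae_of_all _ hb)
  have hlow := mul_integral_le_integral_of_ofReal_smul_le hε hle (f := fun x => 1 + f x)
    (fun x => by linarith [(abs_le.1 (hb x)).1]) ((integrable_const 1).add hfν)
  have hup := mul_integral_le_integral_of_ofReal_smul_le hε hle (f := fun x => 1 - f x)
    (fun x => by linarith [(abs_le.1 (hb x)).2]) ((integrable_const 1).sub hfν)
  rw [integral_add (integrable_const 1) hfμ, integral_add (integrable_const 1) hfν] at hlow
  rw [integral_sub (integrable_const 1) hfμ, integral_sub (integrable_const 1) hfν] at hup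
  simp only [integral_const, probReal_univ, smul_eq_mul, mul_one] at hlow hup
  exact abs_le.2 ⟨by linarith, by linarith⟩

lemma integral_comp_measure {β : Type*} [MeasurableSpace β] {μ : Measure α} {κ : Kernel α β}
    {f : β → ℝ}
    (hf : Integrable f (κ ∘ₘ μ)) : ∫ y, f y ∂(κ ∘ₘ μ) = ∫ x, ∫ y, f y ∂κ x ∂μ := by
  rw [Measure.comp_eq_comp_const_apply] at hf ⊢
  rw [Kernel.integral_comp hf, Kernel.const_apply]

lemma tvDist_comp_le_of_ofReal_smul_le {μ : Measure α} [IsProbabilityMeasure μ] {P : Kernel α α}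
    [IsMarkovKernel P] (hinv : P.Invariant μ) {ε : ℝ} (hε : 0 ≤ ε)
    (hle : ∀ x, ENNReal.ofReal ε • μ ≤ P x) (ν : Measure α) [IsProbabilityMeasure ν] :
    tvDist (P ∘ₘ ν) μ ≤ (1 - ε) * tvDist ν μ := by
  obtain ⟨x₀⟩ := nonempty_of_isProbabilityMeasure μ
  refine tvDist_le_of_forall_abs_integral_sub_le _ _ fun f hf hb => ?_
  set g : α → ℝ := fun x => (∫ y, f y ∂P x) - ε * ∫ y, f y ∂μ
  have hg : Measurable g := (hf.stronglyMeasurable.integral_kernel (κ := P)).measurable.sub_const _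
  have hgb : ∀ x, |g x| ≤ 1 - ε := fun x => abs_integral_sub_mul_integral_le hε (hle x) hf hb
  have hint : ∀ (m : Measure α) [IsProbabilityMeasure m], Integrable f (P ∘ₘ m) :=
    fun m _ => .of_bound hf.aestronglyMeasurable 1 (ae_of_all _ hb)
  have hgint : ∀ (m : Measure α) [IsProbabilityMeasure m], Integrable g m :=
    fun m _ => .of_bound hg.aestronglyMeasurable (1 - ε) (ae_of_all _ hgb)
  have hcomp : ∀ (m : Measure α) [IsProbabilityMeasure m],
      ∫ y, f y ∂(P ∘ₘ m) = (∫ x, g x ∂m) + ε * ∫ y, f y ∂μ := fun m _ => by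
    have hPf : (fun x => ∫ y, f y ∂P x) = fun x => g x + ε * ∫ y, f y ∂μ := by
      simp only [g, sub_add_cancel]
    rw [integral_comp_measure (hint m), hPf, integral_add (hgint m) (integrable_const _),
      integral_const, probReal_univ, one_smul]
  have hdiff : (∫ y, f y ∂(P ∘ₘ ν)) - ∫ y, f y ∂μ = (∫ x, g x ∂ν) - ∫ x, g x ∂μ := by
    conv_lhs => rw [← hinv.def]
    rw [hcomp ν, hcomp μ]
    ring
  rw [hdiff]
  calc _ ≤ 2 * (1 - ε) * tvDist ν μ := abs_integral_sub_le_two_mul_tvDist ν μ hg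
          ((abs_nonneg _).trans (hgb x₀)) hgb
    _ = 2 * ((1 - ε) * tvDist ν μ) := mul_assoc _ _ _

instance isMarkovKernel_kpow (P : Kernel α α) [IsMarkovKernel P] (n : ℕ) :
    IsMarkovKernel (kpow P n) := by
  induction n with
  | zero => exact inferInstanceAs (IsMarkovKernel Kernel.id)
  | succ n _ => exact inferInstanceAs (IsMarkovKernel ((kpow P n).comp P))

lemma tvDist_kpow_comp_le {μ : Measure α} {P : Kernel α α} [IsMarkovKernel P] {r : ℝ}
    (hr : 0 ≤ r)
    (hP : ∀ (ν : Measure α) [IsProbabilityMeasure ν], tvDist (P ∘ₘ ν) μ ≤ r * tvDist ν μ)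
    (n : ℕ) (ν : Measure α) [IsProbabilityMeasure ν] :
    tvDist (kpow P n ∘ₘ ν) μ ≤ r ^ n * tvDist ν μ := by
  induction n generalizing ν with
  | zero => rw [kpow, Measure.id_comp, pow_zero, one_mul]
  | succ n ih =>
    calc tvDist (kpow P (n + 1) ∘ₘ ν) μ = tvDist (kpow P n ∘ₘ (P ∘ₘ ν)) μ := by
          rw [kpow, Measure.comp_assoc]
      _ ≤ r ^ n * (r * tvDist ν μ) := (ih _).trans (by gcongr; exact hP ν)
      _ = r ^ (n + 1) * tvDist ν μ := by ring

lemma sq_integral_le_integral_sq {μ : Measure α} [IsProbabilityMeasure μ] {f : α → ℝ}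
    (hf : MemLp f 2 μ) : (∫ x, f x ∂μ) ^ 2 ≤ ∫ x, f x ^ 2 ∂μ := by
  have := variance_nonneg f μ
  rw [variance_eq_sub hf] at this
  simpa only [Pi.pow_apply, sub_nonneg] using this

lemma integral_abs_le_sqrt_integral_sq {μ : Measure α} [IsProbabilityMeasure μ] {f : α → ℝ}
    (hf : MemLp f 2 μ) : ∫ x, |f x| ∂μ ≤ Real.sqrt (∫ x, f x ^ 2 ∂μ) := by
  have h := sq_integral_le_integral_sq (f := fun x => |f x|) hf.abs
  simp only [sq_abs] at h
  exact Real.le_sqrt_of_sq_le h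

lemma tvDist_le_half_mul_l2Dist {μ ν : Measure α} [IsProbabilityMeasure μ]
    [IsProbabilityMeasure ν] (hν : ν ≪ μ) (hL2 : MemLp (fun x => (ν.rnDeriv μ x).toReal) 2 μ) :
    tvDist ν μ ≤ 1 / 2 * l2Dist ν μ := by
  refine tvDist_le_of_forall_abs_integral_sub_le _ _ fun f hf hb => ?_
  set u : α → ℝ := fun x => (ν.rnDeriv μ x).toReal - 1
  have hu : MemLp u 2 μ := hL2.sub (memLp_const 1)
  have hfu : Integrable (fun x => f x * u x) μ :=
    (hu.integrable one_le_two).bdd_mul hf.aestronglyMeasurable (ae_of_all _ hb)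
  have hfint : Integrable f μ := .of_bound hf.aestronglyMeasurable 1 (ae_of_all _ hb)
  have hdiff : (∫ x, f x ∂ν) - ∫ x, f x ∂μ = ∫ x, f x * u x ∂μ := by
    have hdens : Integrable (fun x => (ν.rnDeriv μ x).toReal • f x) μ :=
      (hfu.add hfint).congr <| ae_of_all _ fun x => by
        simp only [Pi.add_apply, u, smul_eq_mul]; ring
    rw [← integral_rnDeriv_smul hν, ← integral_sub hdens hfint]
    congr with x
    simp only [u, smul_eq_mul]
    ring
  calc |(∫ x, f x ∂ν) - ∫ x, f x ∂μ| = |∫ x, f x * u x ∂μ| := by rw [hdiff]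
    _ ≤ ∫ x, |f x * u x| ∂μ := abs_integral_le_integral_abs
    _ ≤ ∫ x, |u x| ∂μ := integral_mono hfu.abs (hu.integrable one_le_two).abs fun x => by
          rw [abs_mul]; exact mul_le_of_le_one_left (abs_nonneg _) (hb x)
    _ ≤ l2Dist ν μ := integral_abs_le_sqrt_integral_sq hu
    _ = 2 * (1 / 2 * l2Dist ν μ) := by ring

end

theorem minorization_tv_convergence_general {E : Type*} [MeasurableSpace E]
    (μ : Measure E) [IsProbabilityMeasure μ]
    (P : Kernel E E) [IsMarkovKernel P]
    (hrev : ∀ A B : Set E, MeasurableSet A → MeasurableSet B →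
      ∫⁻ x in A, P x B ∂μ = ∫⁻ x in B, P x A ∂μ)
    (ε : ℝ) (hε : 0 < ε)
    (hmin : ∀ x : E, ∀ A : Set E, MeasurableSet A → ENNReal.ofReal ε * μ A ≤ P x A)
    (ν : Measure E) [IsProbabilityMeasure ν] (hν : ν ≪ μ)
    (hL2 : MemLp (fun x => (ν.rnDeriv μ x).toReal) 2 μ)
    (k : ℕ) :
    tvDist (ν.bind (fun x => kpow P k x)) μ ≤ (1 / 2) * l2Dist ν μ * (1 - ε) ^ k := by
  have hinv : P.Invariant μ := Kernel.IsReversible.invariant fun A B => hrev A B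
  have hle : ∀ x, ENNReal.ofReal ε • μ ≤ P x := fun x => Measure.le_iff.2 (hmin x)
  obtain ⟨x₀⟩ := nonempty_of_isProbabilityMeasure μ
  have hε1 : 0 ≤ 1 - ε := sub_nonneg.2 (le_one_of_ofReal_smul_le (hle x₀))
  calc tvDist (kpow P k ∘ₘ ν) μ ≤ (1 - ε) ^ k * tvDist ν μ :=
        tvDist_kpow_comp_le hε1 (tvDist_comp_le_of_ofReal_smul_le hinv hε.le hle) k ν
    _ ≤ (1 - ε) ^ k * (1 / 2 * l2Dist ν μ) := by
        gcongr; exact tvDist_le_half_mul_l2Dist hν hL2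
    _ = 1 / 2 * l2Dist ν μ * (1 - ε) ^ k := mul_comm _ _

/-- For a `μ`-reversible Markov kernel `Π` satisfying the uniform minorization
`Π(x, A) ≥ ε μ(A)`: for every probability measure `ν ≪ μ` with `dν/dμ ∈ L²(μ)` and every
`k ≥ 1`, `‖νΠ^k - μ‖_TV ≤ (1/2) ‖ν - μ‖_{L²(μ)} (1 - ε)^k`. -/
theorem minorization_tv_convergence {E : Type*} [MeasurableSpace E]
    (μ : Measure E) [IsProbabilityMeasure μ]
    (P : Kernel E E) [IsMarkovKernel P]
    (hrev : ∀ A B : Set E, MeasurableSet A → MeasurableSet B →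
      ∫⁻ x in A, P x B ∂μ = ∫⁻ x in B, P x A ∂μ)
    (ε : ℝ) (hε : 0 < ε)
    (hmin : ∀ x : E, ∀ A : Set E, MeasurableSet A → ENNReal.ofReal ε * μ A ≤ P x A)
    (ν : Measure E) [IsProbabilityMeasure ν] (hν : ν ≪ μ)
    (hL2 : MemLp (fun x => (ν.rnDeriv μ x).toReal) 2 μ)
    (k : ℕ) (hk : 1 ≤ k) :
    tvDist (ν.bind (fun x => kpow P k x)) μ ≤ (1 / 2) * l2Dist ν μ * (1 - ε) ^ k :=
  minorization_tv_convergence_general μ P hrev ε hε hmin ν hν hL2 k
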